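/- arXiv:1802.02744 — 7 statements merged into one kernel-verified Lean document; each statement's English description precedes it below -/
import Mathlib

section
/- With P, P_b and latencies as defined (Lat(P,i)=Lat(P,i-1)+c(d_{i-1},s_i)+c(s_i,d_i), Lat(P_b,i)=Lat(P_b,i-1)+c(d_{i-1},s_{i-1})+c(s_{i-1},s_i)+c(s_i,d_i), Lat(P,0)=Lat(P_b,0)=0, and Lat(P,i)=0 for i≤0), for every i≥1 it holds that Lat(P_b,i) ≤ 2·Lat(P,i-1) + Lat(P,i). -/
/-- Lat(P_b,i) ≤ 2·Lat(P,i-1) + Lat(P,i) for every i ≥ 1. -/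
theorem backtracking_le_two_prev_plus_cur {X : Type*} [MetricSpace X] (s d : ℕ → X)
    (h0 : s 0 = d 0)
    (latP latPb : ℕ → ℝ)
    (hP0 : latP 0 = 0)
    (hP : ∀ i, latP (i + 1) = latP i + dist (d i) (s (i + 1)) + dist (s (i + 1)) (d (i + 1)))
    (hPb0 : latPb 0 = 0)
    (hPb : ∀ i, latPb (i + 1) =
      latPb i + dist (d i) (s i) + dist (s i) (s (i + 1)) + dist (s (i + 1)) (d (i + 1))) :
    ∀ i : ℕ, latPb (i + 1) ≤ 2 * latP i + latP (i + 1) := by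
  intro i
  induction i with
  | zero =>
    have h1 := hPb 0
    have h2 := hP 0
    rw [h0] at h1
    simp [dist_self] at h1
    rw [h1, h2, hP0, hPb0]
    linarith
  | succ n ih =>
    have h1 := hPb (n + 1)
    have h2 := hP (n + 1)
    have htri : dist (s (n + 1)) (s (n + 2)) ≤
        dist (s (n + 1)) (d (n + 1)) + dist (d (n + 1)) (s (n + 2)) := dist_triangle _ _ _
    have hcomm : dist (d (n + 1)) (s (n + 1)) = dist (s (n + 1)) (d (n + 1)) := dist_comm _ _
    have hnn : (0 : ℝ) ≤ dist (d n) (s (n + 1)) := dist_nonneg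
    have hP' := hP n
    linarith
end

section
/- Let Lat(P)=∑_{i=1}^n Lat(P,i) and Lat(P_b)=∑_{i=1}^n Lat(P_b,i) with latencies given by the stated recurrences in a metric space. Then Lat(P) ≤ Lat(P_b) ≤ 3·Lat(P). -/
/-- Lat(P) ≤ Lat(P_b) ≤ 3·Lat(P) for the total latencies. -/
theorem total_latency_sandwich {X : Type*} [MetricSpace X] (s d : ℕ → X) (h0 : s 0 = d 0)
    (n : ℕ)
    (latP latPb : ℕ → ℝ)
    (hP0 : latP 0 = 0)
    (hP : ∀ i, latP (i + 1) = latP i + dist (d i) (s (i + 1)) + dist (s (i + 1)) (d (i + 1)))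
    (hPb0 : latPb 0 = 0)
    (hPb : ∀ i, latPb (i + 1) =
      latPb i + dist (d i) (s i) + dist (s i) (s (i + 1)) + dist (s (i + 1)) (d (i + 1))) :
    (∑ i ∈ Finset.range n, latP (i + 1)) ≤ (∑ i ∈ Finset.range n, latPb (i + 1)) ∧
    (∑ i ∈ Finset.range n, latPb (i + 1)) ≤ 3 * ∑ i ∈ Finset.range n, latP (i + 1) := by
  have hle : ∀ i, latP i ≤ latPb i := by
    intro i
    induction i with
    | zero => simp [hP0, hPb0]
    | succ i ih =>
      rw [hP, hPb]
      have htri : dist (d i) (s (i + 1)) ≤ dist (d i) (s i) + dist (s i) (s (i + 1)) :=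
        dist_triangle _ _ _
      linarith
  have hup : ∀ i, latPb i + 2 * dist (s i) (d i) ≤ 3 * latP i := by
    intro i
    induction i with
    | zero => simp [hP0, hPb0, h0]
    | succ i ih =>
      rw [hP, hPb]
      have h1 : dist (d i) (s i) = dist (s i) (d i) := dist_comm _ _
      have h2 : dist (s i) (s (i + 1)) ≤ dist (s i) (d i) + dist (d i) (s (i + 1)) :=
        dist_triangle _ _ _
      have h3 : (0:ℝ) ≤ dist (d i) (s (i + 1)) := dist_nonneg
      linarith
  constructor
  · exact Finset.sum_le_sum fun i _ => hle (i + 1)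
  · rw [Finset.mul_sum]
    refine Finset.sum_le_sum fun i _ => ?_
    have := hup (i + 1)
    have : (0:ℝ) ≤ dist (s (i+1)) (d (i+1)) := dist_nonneg
    linarith [hup (i + 1)]
end

section
/- The factor 3 in the bound Lat(P_b) ≤ 3·Lat(P) is asymptotically tight: in the metric space given by points 0,1,2,...,n on the real line with the absolute-value metric, taking r_0 = s_1 = 0, d_i = s_{i+1} = i for 1 ≤ i ≤ n (with d_n = n), the direct path has total latency Lat(P) = n(n+1)/2, the backtracking path has total latency Lat(P_b) = ∑_{i=1}^n (3(i-1)+1) = (3n^2 - n)/2, and Lat(P_b)/Lat(P) → 3 as n → ∞. -/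
/-- tightness of the factor 3 on the real line with s_i = i-1, d_i = i. -/
theorem backtracking_factor_three_tight (s d : ℕ → ℝ)
    (hs0 : s 0 = 0) (hs : ∀ i : ℕ, s (i + 1) = (i : ℝ)) (hd : ∀ i : ℕ, d i = (i : ℝ))
    (latP latPb : ℕ → ℝ)
    (hP0 : latP 0 = 0)
    (hP : ∀ i, latP (i + 1) = latP i + |d i - s (i + 1)| + |s (i + 1) - d (i + 1)|)
    (hPb0 : latPb 0 = 0)
    (hPb : ∀ i, latPb (i + 1) =
      latPb i + |d i - s i| + |s i - s (i + 1)| + |s (i + 1) - d (i + 1)|) :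
    (∀ n : ℕ, (∑ i ∈ Finset.range n, latP (i + 1)) = (n : ℝ) * ((n : ℝ) + 1) / 2) ∧
    (∀ n : ℕ, (∑ i ∈ Finset.range n, latPb (i + 1)) = (3 * (n : ℝ) ^ 2 - (n : ℝ)) / 2) ∧
    Filter.Tendsto
      (fun n : ℕ => (∑ i ∈ Finset.range n, latPb (i + 1)) / (∑ i ∈ Finset.range n, latP (i + 1)))
      Filter.atTop (nhds 3) := by
  have hlatP : ∀ n : ℕ, latP n = n := by
    intro n
    induction n with
    | zero => simpa using hP0
    | succ k ih =>
      rw [hP k, ih, hd k, hs k, hd (k+1)]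
      push_cast
      rw [show (k:ℝ) - k = 0 by ring, show (k:ℝ) - (k+1) = -1 by ring]
      simp
  have hlatPb : ∀ n : ℕ, latPb (n + 1) = 3 * (n : ℝ) + 1 := by
    intro n
    induction n with
    | zero =>
      rw [hPb 0, hPb0, hd 0, hs0, hs 0, hd 1]
      norm_num
    | succ k ih =>
      rw [hPb (k+1), ih, hd (k+1), hs k, hs (k+1), hd (k+2)]
      push_cast
      rw [show (k:ℝ) + 1 - k = 1 by ring, show (k:ℝ) - (k+1) = -1 by ring,
        show (k:ℝ) + 1 - (k+2) = -1 by ring]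
      simp
      ring
  have hsumP : ∀ n : ℕ, (∑ i ∈ Finset.range n, latP (i + 1)) = (n : ℝ) * ((n : ℝ) + 1) / 2 := by
    intro n
    induction n with
    | zero => simp
    | succ k ih =>
      rw [Finset.sum_range_succ, ih, hlatP]
      push_cast
      ring
  have hsumPb : ∀ n : ℕ, (∑ i ∈ Finset.range n, latPb (i + 1)) = (3 * (n : ℝ) ^ 2 - (n : ℝ)) / 2 := by
    intro n
    induction n with
    | zero => simp
    | succ k ih =>
      rw [Finset.sum_range_succ, ih, hlatPb]
      push_cast
      ring
  refine ⟨hsumP, hsumPb, ?_⟩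
  have heq : ∀ᶠ n : ℕ in Filter.atTop,
      (∑ i ∈ Finset.range n, latPb (i + 1)) / (∑ i ∈ Finset.range n, latP (i + 1))
      = 3 - 4 / ((n : ℝ) + 1) := by
    filter_upwards [Filter.eventually_ge_atTop 1] with n hn
    rw [hsumP, hsumPb]
    have hn0 : (0:ℝ) < (n : ℝ) := by exact_mod_cast hn
    have h1 : (n : ℝ) + 1 ≠ 0 := by positivity
    field_simp
    ring
  rw [Filter.tendsto_congr' heq]
  have : Filter.Tendsto (fun n : ℕ => 4 / ((n : ℝ) + 1)) Filter.atTop (nhds 0) := by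
    apply Filter.Tendsto.div_atTop tendsto_const_nhds
    exact Filter.tendsto_atTop_add_const_right _ _ tendsto_natCast_atTop_atTop
  have h3 := (tendsto_const_nhds (x := (3:ℝ)) (f := Filter.atTop (α := ℕ))).sub this
  simpa using h3
end

section
/- With release-time latencies Lat⁺(P,i)=max{Lat⁺(P,i-1)+c(d_{i-1},s_i), T_i}+c(s_i,d_i) and Lat⁺(P_b,i)=max{Lat⁺(P_b,i-1)+c(d_{i-1},s_{i-1})+c(s_{i-1},s_i), T_i}+c(s_i,d_i) (both starting at 0), for every i≥1 it holds that Lat⁺(P_b,i) ≤ 2·Lat⁺(P,i-1) + Lat⁺(P,i). -/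
/-- with release times, Lat⁺(P_b,i) ≤ 2·Lat⁺(P,i-1) + Lat⁺(P,i) for i ≥ 1. -/
theorem backtracking_release_le_two_prev_plus_cur {X : Type*} [MetricSpace X] (s d : ℕ → X)
    (h0 : s 0 = d 0) (T : ℕ → ℝ) (hT : ∀ i, 0 ≤ T i)
    (latP latPb : ℕ → ℝ)
    (hP0 : latP 0 = 0)
    (hP : ∀ i, latP (i + 1) =
      max (latP i + dist (d i) (s (i + 1))) (T (i + 1)) + dist (s (i + 1)) (d (i + 1)))
    (hPb0 : latPb 0 = 0)
    (hPb : ∀ i, latPb (i + 1) =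
      max (latPb i + dist (d i) (s i) + dist (s i) (s (i + 1))) (T (i + 1)) +
        dist (s (i + 1)) (d (i + 1))) :
    ∀ i : ℕ, latPb (i + 1) ≤ 2 * latP i + latP (i + 1) := by
  have hnn : ∀ i, 0 ≤ latP i := by
    intro i
    cases i with
    | zero => simp [hP0]
    | succ n =>
      rw [hP n]
      have h1 : T (n + 1) ≤ max (latP n + dist (d n) (s (n + 1))) (T (n + 1)) := le_max_right _ _
      have h2 : (0:ℝ) ≤ dist (s (n + 1)) (d (n + 1)) := dist_nonneg
      have := hT (n + 1)
      linarith
  have hstep : ∀ i, latP i + dist (s (i + 1)) (d (i + 1)) ≤ latP (i + 1) := by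
    intro i
    rw [hP i]
    have h1 : latP i + dist (d i) (s (i + 1)) ≤
        max (latP i + dist (d i) (s (i + 1))) (T (i + 1)) := le_max_left _ _
    have h2 : (0:ℝ) ≤ dist (d i) (s (i + 1)) := dist_nonneg
    linarith
  intro i
  induction i with
  | zero =>
    rw [hPb 0, hP 0, hPb0, hP0, h0]
    simp [dist_self]
  | succ n ih =>
    rw [hPb (n + 1), hP (n + 1)]
    have hmax : max (latPb (n + 1) + dist (d (n + 1)) (s (n + 1)) + dist (s (n + 1)) (s (n + 2)))
        (T (n + 2)) ≤ 2 * latP (n + 1) +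
        max (latP (n + 1) + dist (d (n + 1)) (s (n + 2))) (T (n + 2)) := by
      apply max_le
      · have htri : dist (s (n + 1)) (s (n + 2)) ≤
            dist (s (n + 1)) (d (n + 1)) + dist (d (n + 1)) (s (n + 2)) := dist_triangle _ _ _
        have hsym : dist (d (n + 1)) (s (n + 1)) = dist (s (n + 1)) (d (n + 1)) := dist_comm _ _
        have hs := hstep n
        have hle : latP (n + 1) + dist (d (n + 1)) (s (n + 2)) ≤
            max (latP (n + 1) + dist (d (n + 1)) (s (n + 2))) (T (n + 2)) := le_max_left _ _
        have hnn1 := hnn (n + 1)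
        linarith
      · have hle : T (n + 2) ≤
            max (latP (n + 1) + dist (d (n + 1)) (s (n + 2))) (T (n + 2)) := le_max_right _ _
        have := hnn (n + 1)
        linarith
    linarith
end

section
/- With release-time latencies as defined, the totals Lat⁺(P)=∑_{i=1}^n Lat⁺(P,i) and Lat⁺(P_b)=∑_{i=1}^n Lat⁺(P_b,i) satisfy Lat⁺(P) ≤ Lat⁺(P_b) ≤ 3·Lat⁺(P). -/
/-- with release times, Lat⁺(P) ≤ Lat⁺(P_b) ≤ 3·Lat⁺(P). -/
theorem total_latency_release_sandwich {X : Type*} [MetricSpace X] (s d : ℕ → X)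
    (h0 : s 0 = d 0) (T : ℕ → ℝ) (hT : ∀ i, 0 ≤ T i) (n : ℕ)
    (latP latPb : ℕ → ℝ)
    (hP0 : latP 0 = 0)
    (hP : ∀ i, latP (i + 1) =
      max (latP i + dist (d i) (s (i + 1))) (T (i + 1)) + dist (s (i + 1)) (d (i + 1)))
    (hPb0 : latPb 0 = 0)
    (hPb : ∀ i, latPb (i + 1) =
      max (latPb i + dist (d i) (s i) + dist (s i) (s (i + 1))) (T (i + 1)) +
        dist (s (i + 1)) (d (i + 1))) :
    (∑ i ∈ Finset.range n, latP (i + 1)) ≤ (∑ i ∈ Finset.range n, latPb (i + 1)) ∧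
    (∑ i ∈ Finset.range n, latPb (i + 1)) ≤ 3 * ∑ i ∈ Finset.range n, latP (i + 1) := by
  have hnonneg : ∀ i, 0 ≤ latP i := by
    intro i
    induction i with
    | zero => simp [hP0]
    | succ k ih =>
      rw [hP k]
      have h1 := dist_nonneg (x := s (k+1)) (y := d (k+1))
      have h2 : T (k+1) ≤ max (latP k + dist (d k) (s (k+1))) (T (k+1)) := le_max_right _ _
      linarith [hT (k+1)]
  have h1 : ∀ i, latP i ≤ latPb i := by
    intro i
    induction i with
    | zero => rw [hP0, hPb0]
    | succ k ih =>
      rw [hP k, hPb k]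
      have htri : dist (d k) (s (k+1)) ≤ dist (d k) (s k) + dist (s k) (s (k+1)) :=
        dist_triangle _ _ _
      have hmax : max (latP k + dist (d k) (s (k+1))) (T (k+1)) ≤
          max (latPb k + dist (d k) (s k) + dist (s k) (s (k+1))) (T (k+1)) := by
        apply max_le_max _ le_rfl
        linarith
      linarith
  have h2 : ∀ i, latPb i + 2 * dist (s i) (d i) ≤ 3 * latP i := by
    intro i
    induction i with
    | zero => simp [hP0, hPb0, h0]
    | succ k ih =>
      rw [hP k, hPb k]
      have htri : dist (s k) (s (k+1)) ≤ dist (s k) (d k) + dist (d k) (s (k+1)) :=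
        dist_triangle _ _ _
      have hd : dist (d k) (s k) = dist (s k) (d k) := dist_comm _ _
      have hb : (0:ℝ) ≤ dist (d k) (s (k+1)) := dist_nonneg
      have hmax1 : latP k + dist (d k) (s (k+1)) ≤
          max (latP k + dist (d k) (s (k+1))) (T (k+1)) := le_max_left _ _
      have hmax2 : T (k+1) ≤ max (latP k + dist (d k) (s (k+1))) (T (k+1)) := le_max_right _ _
      have hA : max (latPb k + dist (d k) (s k) + dist (s k) (s (k+1))) (T (k+1)) ≤
          3 * max (latP k + dist (d k) (s (k+1))) (T (k+1)) := by
        apply max_le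
        · linarith [hnonneg k]
        · linarith [hT (k+1), hnonneg k]
      linarith [dist_nonneg (x := s (k+1)) (y := d (k+1))]
  constructor
  · exact Finset.sum_le_sum fun i _ => h1 (i + 1)
  · rw [Finset.mul_sum]
    exact Finset.sum_le_sum fun i _ => by
      have := h2 (i + 1)
      have := dist_nonneg (x := s (i+1)) (y := d (i+1))
      linarith
end

section
/- In the concatenation graph CG(w_1,...,w_n) with w_1 = 0 and w_j ≥ 0, the shortest 1⇝n path has length at most (μ*/2)·∑_{ℓ=1}^n w_ℓ, where μ* < 3.5912 is the unique solution of μ ln μ = μ + 1. -/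
/-- Length of a path (given as the increasing list of visited nodes) in the
concatenation graph `CG(w_1,...,w_n)`: the arc `(i,j)` has length `(n - (i+j)/2) * w j`. -/
noncomputable def cgLen (n : ℕ) (w : ℕ → ℝ) : List ℕ → ℝ
  | i :: j :: rest => ((n : ℝ) - ((i : ℝ) + (j : ℝ)) / 2) * w j + cgLen n w (j :: rest)
  | _ => 0

/-- A valid `1 ⇝ n` path in the concatenation graph. -/
def IsCGPath (n : ℕ) (p : List ℕ) : Prop :=
  p.Chain' (· < ·) ∧ p.head? = some 1 ∧ p.getLast? = some n ∧ ∀ j ∈ p, 1 ≤ j ∧ j ≤ n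

/-!
Randomised geometric back-off. For an offset `t ∈ (0, 1]` put `X_k = μ ^ (t + k)` and
`b_k = ⌊X_k⌋`. Since `μ ≥ 2` the `b_k` strictly increase, and the path
`1 → n - b_K → ⋯ → n - b_0 → n`, with `K` the last index such that `n - b_K ≥ 2`, pays at most
`(b_{k+1} + b_k) / 2 ≤ (μ + 1) / 2 · X_k` per unit of `w (n - b_k)`, plus `X_0 / 2 · w n` for the
last arc. Averaging over `t`, the substitution `y = μ ^ τ` turns the expected value of
`∑_k X_k · w (n - ⌊X_k⌋)` into `(∑_ℓ w ℓ) / ln μ`, and `(μ + 1) / ln μ = μ` is exactly the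
fixed-point equation; the last arc averages to `(μ - 1) / (2 ln μ) · w n ≤ μ / 2 · w n`. Some `t`
does at most as well as the average. Finally, `ln μ = 1 + 1 / μ`, so `μ ≥ 3.5912` would give
`μ ≤ e ^ (1 + 1 / 3.5912) < 3.5912`.
-/

open Finset MeasureTheory Real

theorem IntervalIntegrable.mono_natCast_succ {f : ℝ → ℝ} {n k : ℕ}
    (hf : IntervalIntegrable f volume 0 n) (hk : k < n) :
    IntervalIntegrable f volume k (k + 1) :=
  hf.mono_set (Set.uIcc_subset_uIcc (Set.mem_uIcc_of_le (by positivity) (by exact_mod_cast hk.le))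
    (Set.mem_uIcc_of_le (by positivity) (by exact_mod_cast hk)))

theorem IntervalIntegrable.comp_add_natCast_zero_one {f : ℝ → ℝ} {n k : ℕ}
    (hf : IntervalIntegrable f volume 0 n) (hk : k < n) :
    IntervalIntegrable (fun t => f (t + k)) volume 0 1 := by
  simpa using (hf.mono_natCast_succ hk).comp_add_right k

theorem intervalIntegrable_sum_comp_add_natCast {f : ℝ → ℝ} {n : ℕ}
    (hf : IntervalIntegrable f volume 0 n) :
    IntervalIntegrable (fun t => ∑ k ∈ range n, f (t + k)) volume 0 1 := by
  simpa [Finset.sum_fn] using IntervalIntegrable.sum (range n)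
    fun k hk => hf.comp_add_natCast_zero_one (mem_range.1 hk)

theorem integral_sum_comp_add_natCast {f : ℝ → ℝ} {n : ℕ} (hf : IntervalIntegrable f volume 0 n) :
    ∫ t in 0..1, ∑ k ∈ range n, f (t + k) = ∫ t in 0..n, f t := by
  rw [intervalIntegral.integral_finsetSum fun k hk =>
    hf.comp_add_natCast_zero_one (mem_range.1 hk)]
  simpa [intervalIntegral.integral_comp_add_right, add_comm] using
    intervalIntegral.sum_integral_adjacent_intervals (a := fun k : ℕ => (k : ℝ)) fun k hk =>
      by simpa using hf.mono_natCast_succ hk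

theorem exists_le_integral_zero_one {f : ℝ → ℝ} (hf : IntervalIntegrable f volume 0 1) :
    ∃ t ∈ Set.Ioc (0 : ℝ) 1, f t ≤ ∫ s in 0..1, f s := by
  have := exists_le_setAverage (μ := volume) (s := Set.Ioc (0 : ℝ) 1) (by simp) (by simp)
    ((intervalIntegrable_iff_integrableOn_Ioc_of_le zero_le_one).1 hf)
  simpa [setAverage_eq, intervalIntegral.integral_of_le zero_le_one] using this

/-- In the variable `y = exp (τ * L)` this is `y * g ⌊y⌋`; as `dτ = dy / (L * y)`, each unit
step `y ∈ [m, m + 1)` contributes `g m / L` to its integral. -/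
noncomputable def expFloorMul (L : ℝ) (g : ℕ → ℝ) (τ : ℝ) : ℝ :=
  exp (τ * L) * g ⌊exp (τ * L)⌋₊

section expFloorMul

variable {L : ℝ} {g : ℕ → ℝ}

theorem log_div_le_log_succ_div (hL : 0 < L) (m : ℕ) : log m / L ≤ log (m + 1) / L := by
  rcases m.eq_zero_or_pos with rfl | hm
  · simp
  · gcongr
    linarith

theorem expFloorMul_eqOn (hL : 0 < L) {m : ℕ} (hm : 1 ≤ m) :
    Set.EqOn (expFloorMul L g) (fun τ => exp (τ * L) * g m)
      (Set.Ioo (log m / L) (log (m + 1) / L)) := by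
  rintro τ ⟨hlo, hhi⟩
  have hm' : (0 : ℝ) < m := by exact_mod_cast hm
  rw [div_lt_iff₀ hL, log_lt_iff_lt_exp hm'] at hlo
  rw [lt_div_iff₀ hL, lt_log_iff_exp_lt (by positivity)] at hhi
  rw [expFloorMul, (Nat.floor_eq_iff (exp_pos _).le).2 ⟨hlo.le, hhi⟩]

theorem intervalIntegrable_expFloorMul_Ioo (hL : 0 < L) {m : ℕ} (hm : 1 ≤ m) :
    IntervalIntegrable (expFloorMul L g) volume (log m / L) (log (m + 1) / L) := by
  have hcont : Continuous fun τ => exp (τ * L) * g m := by fun_prop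
  refine (hcont.intervalIntegrable _ _).congr_uIoo ?_
  rw [Set.uIoo_of_le (log_div_le_log_succ_div hL m)]
  exact (expFloorMul_eqOn hL hm).symm

theorem integral_exp_mul (hL : 0 < L) (a b : ℝ) :
    ∫ τ in a..b, exp (τ * L) = (exp (b * L) - exp (a * L)) / L := by
  rw [intervalIntegral.integral_comp_mul_right exp hL.ne', integral_exp, smul_eq_mul,
    inv_mul_eq_div]

theorem integral_expFloorMul_Ioo (hL : 0 < L) {m : ℕ} (hm : 1 ≤ m) :
    ∫ τ in log m / L..log (m + 1) / L, expFloorMul L g τ = g m / L := by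
  have hm' : (0 : ℝ) < m := by exact_mod_cast hm
  rw [intervalIntegral.integral_congr_Ioo_of_le (log_div_le_log_succ_div hL m)
      (expFloorMul_eqOn hL hm), intervalIntegral.integral_mul_const, integral_exp_mul hL,
    div_mul_cancel₀ _ hL.ne', div_mul_cancel₀ _ hL.ne', exp_log hm', exp_log (by positivity)]
  ring

theorem intervalIntegrable_expFloorMul_log (hL : 0 < L) {N : ℕ} (hN : 1 ≤ N) :
    IntervalIntegrable (expFloorMul L g) volume 0 (log N / L) := by
  simpa using IntervalIntegrable.trans_iterate_Ico (a := fun m : ℕ => log m / L) hN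
    fun m hm => by simpa using intervalIntegrable_expFloorMul_Ioo (g := g) hL hm.1

theorem integral_expFloorMul_log (hL : 0 < L) {N : ℕ} (hN : 1 ≤ N) :
    ∫ τ in 0..log N / L, expFloorMul L g τ = (∑ m ∈ Ico 1 N, g m) / L := by
  have := intervalIntegral.sum_integral_adjacent_intervals_Ico (μ := volume)
    (f := expFloorMul L g) (a := fun m : ℕ => log m / L) hN
    fun m hm => by simpa using intervalIntegrable_expFloorMul_Ioo (g := g) hL hm.1
  simp only [Nat.cast_one, log_one, zero_div, Nat.cast_add] at this
  rw [← this, sum_div]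
  exact sum_congr rfl fun m hm => integral_expFloorMul_Ioo hL (mem_Ico.1 hm).1

theorem le_log_ceil_exp_div (hL : 0 < L) (T : ℝ) : T ≤ log ⌈exp (T * L)⌉₊ / L := by
  rw [le_div_iff₀ hL]
  calc T * L = log (exp (T * L)) := (log_exp _).symm
    _ ≤ _ := log_le_log (exp_pos _) (Nat.le_ceil _)

theorem intervalIntegrable_expFloorMul (hL : 0 < L) {T : ℝ} (hT : 0 ≤ T) :
    IntervalIntegrable (expFloorMul L g) volume 0 T :=
  (intervalIntegrable_expFloorMul_log hL (Nat.ceil_pos.2 (exp_pos (T * L)))).mono_set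
    (Set.uIcc_subset_uIcc Set.left_mem_uIcc
      (Set.mem_uIcc_of_le hT (le_log_ceil_exp_div hL T)))

theorem integral_expFloorMul_le (hL : 0 < L) (hg : ∀ m, 0 ≤ g m) {T : ℝ} (hT : 0 ≤ T) :
    ∫ τ in 0..T, expFloorMul L g τ ≤ (∑ m ∈ Ico 1 ⌈exp (T * L)⌉₊, g m) / L := by
  have hN : 1 ≤ ⌈exp (T * L)⌉₊ := Nat.ceil_pos.2 (exp_pos _)
  rw [← integral_expFloorMul_log hL hN]
  refine intervalIntegral.integral_mono_interval le_rfl hT (le_log_ceil_exp_div hL T)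
    (Filter.Eventually.of_forall fun τ => mul_nonneg (exp_pos _).le (hg _))
    (intervalIntegrable_expFloorMul_log hL hN)

end expFloorMul

section FixedPoint

variable {μ : ℝ}

theorem log_eq_one_add_inv_of_mul_log_eq (hμ1 : 1 < μ) (hμ : μ * log μ = μ + 1) :
    log μ = 1 + μ⁻¹ := by
  field_simp
  linarith

theorem two_le_of_mul_log_eq (hμ1 : 1 < μ) (hμ : μ * log μ = μ + 1) : 2 ≤ μ := by
  have h1 : 1 ≤ log μ := by
    rw [log_eq_one_add_inv_of_mul_log_eq hμ1 hμ]
    linarith [inv_pos.2 (zero_lt_one.trans hμ1)]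
  have := exp_one_gt_d9
  calc (2 : ℝ) ≤ exp 1 := by linarith
    _ ≤ exp (log μ) := exp_le_exp.2 h1
    _ = μ := exp_log (by linarith)

theorem lt_of_mul_log_eq (hμ1 : 1 < μ) (hμ : μ * log μ = μ + 1) : μ < 3.5912 := by
  by_contra! h
  have hexp : exp (1 / 3.5912) < 1.32112 := by
    refine (exp_bound' (by norm_num) (by norm_num) (n := 5) (by norm_num)).trans_lt ?_
    simp only [sum_range_succ, sum_range_zero, Nat.factorial]
    norm_num
  have hlog : log μ ≤ 1 + 1 / 3.5912 := by
    rw [log_eq_one_add_inv_of_mul_log_eq hμ1 hμ, ← one_div]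
    gcongr
  have := exp_one_lt_d9
  have := calc μ = exp (log μ) := (exp_log (by linarith)).symm
    _ ≤ exp (1 + 1 / 3.5912) := exp_le_exp.2 hlog
    _ = exp 1 * exp (1 / 3.5912) := exp_add _ _
    _ < 2.7182818286 * 1.32112 := by gcongr
  linarith

end FixedPoint

theorem cgLen_cons_of_head? {n : ℕ} {w : ℕ → ℝ} {i j : ℕ} {l : List ℕ} (h : l.head? = some j) :
    cgLen n w (i :: l) = ((n : ℝ) - (i + j) / 2) * w j + cgLen n w l := by
  cases l with
  | nil => cases h
  | cons k l => cases Option.some.inj h; rfl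

def cgTail (n : ℕ) (b : ℕ → ℕ) : ℕ → List ℕ
  | 0 => [n - b 0, n]
  | k + 1 => (n - b (k + 1)) :: cgTail n b k

section cgTail

variable {n : ℕ} {b : ℕ → ℕ}

theorem cgTail_head? (k : ℕ) : (cgTail n b k).head? = some (n - b k) := by
  cases k <;> rfl

theorem cgTail_getLast? (k : ℕ) : (cgTail n b k).getLast? = some n := by
  induction k with
  | zero => rfl
  | succ k ih => rw [cgTail, List.getLast?_cons, ih]; rfl

theorem mem_Icc_of_mem_cgTail (hb : Monotone b) {k j : ℕ} (hj : j ∈ cgTail n b k) :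
    j ∈ Set.Icc (n - b k) n := by
  rw [Set.mem_Icc]
  induction k with
  | zero => simp only [cgTail, List.mem_cons, List.not_mem_nil, or_false] at hj; omega
  | succ k ih =>
    have : b k ≤ b (k + 1) := hb (Nat.le_succ k)
    rcases List.mem_cons.1 hj with rfl | hj
    · omega
    · have := ih hj; omega

theorem isChain_cgTail (hb : StrictMono b) (hb0 : 1 ≤ b 0) {k : ℕ} (hk : b k ≤ n) :
    (cgTail n b k).IsChain (· < ·) := by
  induction k with
  | zero => simp only [cgTail, List.isChain_cons_cons, List.IsChain.singleton, and_true]; omega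
  | succ k ih =>
    have : b k < b (k + 1) := hb (Nat.lt_succ_self k)
    refine (ih (by omega)).cons ?_
    simp only [cgTail_head?, Option.mem_def, Option.some.injEq, forall_eq']
    omega

theorem cgLen_cgTail (w : ℕ → ℝ) (hb : Monotone b) {k : ℕ} (hk : b k ≤ n) :
    cgLen n w (cgTail n b k) =
      ∑ i ∈ range k, ((b (i + 1) : ℝ) + b i) / 2 * w (n - b i) + (b 0 : ℝ) / 2 * w n := by
  induction k with
  | zero =>
    simp only [cgTail, cgLen, Nat.cast_sub hk, range_zero, sum_empty]
    ring
  | succ k ih =>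
    have hbk : b k ≤ n := (hb (Nat.le_succ k)).trans hk
    rw [cgTail, cgLen_cons_of_head? (cgTail_head? k), ih hbk, sum_range_succ,
      Nat.cast_sub hk, Nat.cast_sub hbk]
    ring

theorem isCGPath_one_cons_cgTail (hb : StrictMono b) (hb0 : 1 ≤ b 0) {k : ℕ}
    (hk : b k ≤ n - 2) :
    IsCGPath n (1 :: cgTail n b k) := by
  have hbk : 1 ≤ b k := hb0.trans (hb.monotone (Nat.zero_le k))
  refine ⟨(isChain_cgTail hb hb0 (by omega)).cons ?_, rfl, ?_, ?_⟩
  · simp only [cgTail_head?, Option.mem_def, Option.some.injEq, forall_eq']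
    omega
  · rw [List.getLast?_cons, cgTail_getLast?]; rfl
  · intro j hj
    rcases List.mem_cons.1 hj with rfl | hj
    · omega
    · obtain ⟨h1, h2⟩ := mem_Icc_of_mem_cgTail hb.monotone hj
      omega

theorem cgLen_one_cons_cgTail_le {w : ℕ → ℝ} (hw : ∀ j, 0 ≤ w j) (hb : Monotone b) {k : ℕ}
    (hk : b k ≤ n - 2) (hk1 : n - 1 ≤ b (k + 1)) :
    cgLen n w (1 :: cgTail n b k) ≤
      ∑ i ∈ range (k + 1), ((b (i + 1) : ℝ) + b i) / 2 * w (n - b i) + (b 0 : ℝ) / 2 * w n := by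
  have hkn : b k ≤ n := by omega
  have hk1' : (n : ℝ) ≤ b (k + 1) + 1 := by exact_mod_cast (by omega : n ≤ b (k + 1) + 1)
  have harc : ((n : ℝ) - ((1 : ℕ) + ((n - b k : ℕ) : ℝ)) / 2) * w (n - b k) ≤
      ((b (k + 1) : ℝ) + b k) / 2 * w (n - b k) := by
    refine mul_le_mul_of_nonneg_right ?_ (hw _)
    rw [Nat.cast_sub hkn]; push_cast; linarith
  rw [cgLen_cons_of_head? (cgTail_head? k), cgLen_cgTail w hb hkn, sum_range_succ]
  linarith

end cgTail

theorem isCGPath_pair {n : ℕ} (hn : 2 ≤ n) : IsCGPath n [1, n] := by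
  refine ⟨?_, rfl, rfl, by simp; omega⟩
  show List.IsChain _ _
  simp only [List.isChain_cons_cons, List.IsChain.singleton, and_true]
  omega

noncomputable def cgBackWeight (n : ℕ) (w : ℕ → ℝ) (m : ℕ) : ℝ :=
  if m ≤ n - 2 then w (n - m) else 0

theorem cgBackWeight_nonneg {n : ℕ} {w : ℕ → ℝ} (hw : ∀ j, 0 ≤ w j) (m : ℕ) :
    0 ≤ cgBackWeight n w m := by
  unfold cgBackWeight; split_ifs <;> simp [hw]

theorem sum_cgBackWeight_le {n : ℕ} (hn : 2 ≤ n) {w : ℕ → ℝ} (hw : ∀ j, 0 ≤ w j) (N : ℕ) :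
    ∑ m ∈ Ico 1 N, cgBackWeight n w m ≤ ∑ ℓ ∈ Ico 2 n, w ℓ :=
  calc ∑ m ∈ Ico 1 N, cgBackWeight n w m = ∑ m ∈ Ico 1 N with m ≤ n - 2, w (n - m) :=
        (sum_filter _ _).symm
    _ ≤ ∑ m ∈ Ico 1 (n - 1), w (n - m) :=
        sum_le_sum_of_subset_of_nonneg (fun m => by simp; omega) fun _ _ _ => hw _
    _ = ∑ ℓ ∈ Ico 2 n, w ℓ := by
        rw [sum_Ico_reflect w 1 (by omega), show n + 1 - (n - 1) = 2 by omega, Nat.add_sub_cancel]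

theorem exists_isCGPath_cgLen_le_of_strictMono {n : ℕ} (hn : 2 ≤ n) {w : ℕ → ℝ}
    (hw : ∀ j, 0 ≤ w j) {b : ℕ → ℕ} (hb : StrictMono b) (hb0 : 1 ≤ b 0) :
    ∃ p, IsCGPath n p ∧ cgLen n w p ≤
      ∑ k ∈ range n, ((b (k + 1) : ℝ) + b k) / 2 * cgBackWeight n w (b k) +
        (b 0 : ℝ) / 2 * w n := by
  have hterm : ∀ k, 0 ≤ ((b (k + 1) : ℝ) + b k) / 2 * cgBackWeight n w (b k) :=
    fun k => mul_nonneg (by positivity) (cgBackWeight_nonneg hw _)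
  by_cases h0 : b 0 ≤ n - 2
  · set K := Nat.findGreatest (fun k => b k ≤ n - 2) n
    have hK : b K ≤ n - 2 := Nat.findGreatest_spec (P := fun k => b k ≤ n - 2) (Nat.zero_le n) h0
    have hKn : K < n := by have := hb.id_le K; simp only [id] at this; omega
    have hK1 : n - 1 ≤ b (K + 1) := by
      by_contra! h
      have := hb.id_le (K + 1); simp only [id] at this
      have := Nat.le_findGreatest (P := fun k => b k ≤ n - 2) (n := n) (by omega)
        (by omega : b (K + 1) ≤ n - 2)
      omega
    refine ⟨_, isCGPath_one_cons_cgTail hb hb0 hK,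
      (cgLen_one_cons_cgTail_le hw hb.monotone hK hK1).trans ?_⟩
    gcongr ?_ + _
    calc ∑ i ∈ range (K + 1), ((b (i + 1) : ℝ) + b i) / 2 * w (n - b i)
        = ∑ i ∈ range (K + 1), ((b (i + 1) : ℝ) + b i) / 2 * cgBackWeight n w (b i) := by
          refine sum_congr rfl fun i hi => ?_
          have := hb.monotone (Nat.lt_succ_iff.1 (mem_range.1 hi))
          rw [cgBackWeight, if_pos (by omega)]
      _ ≤ _ := sum_le_sum_of_subset_of_nonneg (range_subset_range.2 hKn) fun k _ _ => hterm k
  · refine ⟨[1, n], isCGPath_pair hn, ?_⟩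
    have : (n : ℝ) ≤ b 0 + 1 := by exact_mod_cast (by omega : n ≤ b 0 + 1)
    have := sum_nonneg fun k (_ : k ∈ range n) => hterm k
    have := hw n
    norm_num [cgLen]
    nlinarith

noncomputable def cgPathBound (n : ℕ) (w : ℕ → ℝ) (μ t : ℝ) : ℝ :=
  (μ + 1) / 2 * ∑ k ∈ range n, expFloorMul (log μ) (cgBackWeight n w) (t + k) +
    exp (t * log μ) / 2 * w n

section cgPathBound

variable {n : ℕ} {w : ℕ → ℝ} {μ : ℝ}

theorem exists_isCGPath_cgLen_le_cgPathBound (hn : 2 ≤ n) (hw : ∀ j, 0 ≤ w j) (hμ : 2 ≤ μ)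
    {t : ℝ} (ht : 0 ≤ t) : ∃ p, IsCGPath n p ∧ cgLen n w p ≤ cgPathBound n w μ t := by
  simp only [cgPathBound, expFloorMul]
  set L := log μ
  have hL : 0 ≤ L := log_nonneg (by linarith)
  set X : ℕ → ℝ := fun k => exp ((t + k) * L) with hX
  have hX1 : ∀ k, 1 ≤ X k := fun k => one_le_exp (by positivity)
  have hX_succ : ∀ k, X (k + 1) = μ * X k := by
    intro k
    simp only [hX, Nat.cast_succ]
    rw [show (t + (k + 1)) * L = L + (t + k) * L by ring, exp_add, exp_log (by linarith)]
  have hfloor_le : ∀ k, (⌊X k⌋₊ : ℝ) ≤ X k := fun k => Nat.floor_le (by linarith [hX1 k])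
  have hb : StrictMono fun k => ⌊X k⌋₊ := strictMono_nat_of_lt_succ fun k =>
    calc ⌊X k⌋₊ < ⌊X k⌋₊ + 1 := lt_add_one _
      _ = ⌊X k + 1⌋₊ := (Nat.floor_add_one (by linarith [hX1 k])).symm
      _ ≤ ⌊X (k + 1)⌋₊ := Nat.floor_mono (by rw [hX_succ]; nlinarith [hX1 k])
  obtain ⟨p, hp, hlen⟩ :=
    exists_isCGPath_cgLen_le_of_strictMono hn hw hb (Nat.le_floor (by simpa using hX1 0))
  refine ⟨p, hp, hlen.trans ?_⟩
  rw [mul_sum]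
  refine add_le_add (sum_le_sum fun k _ => ?_) ?_
  · have hk1 : (⌊X (k + 1)⌋₊ : ℝ) ≤ μ * X k := hX_succ k ▸ hfloor_le (k + 1)
    show _ ≤ (μ + 1) / 2 * (X k * cgBackWeight n w ⌊X k⌋₊)
    rw [← mul_assoc]
    exact mul_le_mul_of_nonneg_right (by linarith [hfloor_le k]) (cgBackWeight_nonneg hw _)
  · have h0 : X 0 = exp (t * L) := by simp [X]
    exact mul_le_mul_of_nonneg_right (by linarith [hfloor_le 0]) (hw n)

theorem intervalIntegrable_cgPathBound (hμ1 : 1 < μ) :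
    IntervalIntegrable (cgPathBound n w μ) volume 0 1 := by
  have hint := intervalIntegrable_sum_comp_add_natCast
    (intervalIntegrable_expFloorMul (g := cgBackWeight n w) (log_pos hμ1) (Nat.cast_nonneg n))
  exact (hint.const_mul _).add (Continuous.intervalIntegrable (by fun_prop) _ _)

theorem integral_cgPathBound_le (hn : 2 ≤ n) (hw : ∀ j, 0 ≤ w j) (hμ1 : 1 < μ)
    (hμ : μ * log μ = μ + 1) :
    ∫ t in 0..1, cgPathBound n w μ t ≤ μ / 2 * ∑ ℓ ∈ Icc 1 n, w ℓ := by
  have hL : 0 < log μ := log_pos hμ1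
  set S := ∑ ℓ ∈ Ico 2 n, w ℓ
  set I := ∫ τ in 0..n, expFloorMul (log μ) (cgBackWeight n w) τ
  have hint := intervalIntegrable_expFloorMul (g := cgBackWeight n w) hL (Nat.cast_nonneg n)
  have hI : I ≤ S / log μ :=
    (integral_expFloorMul_le hL (cgBackWeight_nonneg hw) (Nat.cast_nonneg n)).trans
      (div_le_div_of_nonneg_right (sum_cgBackWeight_le hn hw _) hL.le)
  have hsplit :
      ∫ t in 0..1, cgPathBound n w μ t = (μ + 1) / 2 * I + (μ - 1) / log μ / 2 * w n := by
    unfold cgPathBound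
    rw [intervalIntegral.integral_add
        ((intervalIntegrable_sum_comp_add_natCast hint).const_mul _)
        (Continuous.intervalIntegrable (by fun_prop) _ _),
      intervalIntegral.integral_const_mul, integral_sum_comp_add_natCast hint,
      intervalIntegral.integral_mul_const, intervalIntegral.integral_div, integral_exp_mul hL]
    simp [I, exp_log (zero_lt_one.trans hμ1)]
  have hμL : (μ + 1) / log μ = μ := by rw [div_eq_iff hL.ne', hμ]
  have hcoef : (μ - 1) / log μ ≤ μ := by rw [div_le_iff₀ hL]; linarith
  have hS : S + w n ≤ ∑ ℓ ∈ Icc 1 n, w ℓ := by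
    rw [← sum_Ico_succ_top (by omega)]
    exact sum_le_sum_of_subset_of_nonneg (fun ℓ => by simp; omega) fun ℓ _ _ => hw ℓ
  rw [hsplit]
  calc (μ + 1) / 2 * I + (μ - 1) / log μ / 2 * w n
      ≤ (μ + 1) / 2 * (S / log μ) + μ / 2 * w n := by
        gcongr
        exact hw n
    _ = (μ + 1) / log μ / 2 * S + μ / 2 * w n := by ring
    _ = μ / 2 * (S + w n) := by rw [hμL]; ring
    _ ≤ μ / 2 * ∑ ℓ ∈ Icc 1 n, w ℓ := by gcongr

end cgPathBound

theorem shortest_cg_path_length_bound_general (n : ℕ) (hn : 1 ≤ n) (w : ℕ → ℝ)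
    (hw : ∀ j, 0 ≤ w j)
    (μ : ℝ) (hμ1 : 1 < μ) (hμ : μ * Real.log μ = μ + 1) :
    μ < 3.5912 ∧
      ∃ p : List ℕ, IsCGPath n p ∧ cgLen n w p ≤ μ / 2 * ∑ ℓ ∈ Finset.Icc 1 n, w ℓ := by
  refine ⟨lt_of_mul_log_eq hμ1 hμ, ?_⟩
  obtain rfl | hn2 := hn.eq_or_lt
  · refine ⟨[1], ⟨List.IsChain.singleton 1, rfl, rfl, by simp⟩, ?_⟩
    simpa [cgLen] using mul_nonneg (by linarith) (hw 1)
  obtain ⟨t, ht, hFt⟩ :=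
    exists_le_integral_zero_one (intervalIntegrable_cgPathBound (n := n) (w := w) hμ1)
  obtain ⟨p, hp, hlen⟩ := exists_isCGPath_cgLen_le_cgPathBound hn2 hw
    (two_le_of_mul_log_eq hμ1 hμ) ht.1.le
  exact ⟨p, hp, hlen.trans (hFt.trans (integral_cgPathBound_le hn2 hw hμ1 hμ))⟩

/-- the shortest 1⇝n path in the concatenation graph has length at most
(μ*/2)·∑ w_ℓ, where μ* < 3.5912 solves μ ln μ = μ + 1. -/
theorem shortest_cg_path_length_bound (n : ℕ) (hn : 1 ≤ n) (w : ℕ → ℝ)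
    (hw1 : w 1 = 0) (hw : ∀ j, 0 ≤ w j)
    (μ : ℝ) (hμ1 : 1 < μ) (hμ : μ * Real.log μ = μ + 1) :
    μ < 3.5912 ∧
      ∃ p : List ℕ, IsCGPath n p ∧ cgLen n w p ≤ μ / 2 * ∑ ℓ ∈ Finset.Icc 1 n, w ℓ :=
  shortest_cg_path_length_bound_general n hn w hw μ hμ1 hμ
end

section
/- Suppose an α-approximation algorithm exists for multi-depot k-MLP with point requests. For an instance of multi-depot k-MLP with point-to-point requests with optimum OPT, construct the point-request instance under the metric c'(v_i,v_j) = c(s_i,s_j) + c(s_i,d_i) + c(s_j,d_j), with optimum OPT'. Then OPT ≤ OPT' ≤ 3·OPT, assuming (a) every rooted path in the c'-instance corresponds to a backtracking path in the original instance with equal latency, and (b) for every path P and its backtracking path P_b, Lat(P) ≤ Lat(P_b) ≤ 3·Lat(P). -/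
/-- the factor-3 reduction from point-to-point requests to point requests.
`S` is the set of solutions (routings) of the point-to-point instance with latency `L`;
`S'` is that of the reduced point-request instance under `c'` with latency `L'`.
Hypothesis (a): every solution of the c'-instance corresponds to a (backtracking) solution
of the original instance of no greater latency; hypothesis (b): every path maps to a
backtracking path, i.e. a c'-solution, with Lat(P) ≤ Lat(P_b) ≤ 3·Lat(P). -/
theorem factor_three_reduction {S S' : Type*} (L : S → ℝ) (L' : S' → ℝ)
    (OPT OPT' : ℝ)
    (hOPT : IsLeast (Set.range L) OPT) (hOPT' : IsLeast (Set.range L') OPT')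
    (ha : ∀ Q : S', ∃ P : S, L P ≤ L' Q)
    (hb : ∀ P : S, ∃ Q : S', L P ≤ L' Q ∧ L' Q ≤ 3 * L P) :
    OPT ≤ OPT' ∧ OPT' ≤ 3 * OPT := by
  obtain ⟨⟨Q0, hQ0⟩, hlb'⟩ := hOPT'
  obtain ⟨⟨P0, hP0⟩, hlb⟩ := hOPT
  constructor
  · obtain ⟨P, hP⟩ := ha Q0
    calc OPT ≤ L P := hlb ⟨P, rfl⟩
    _ ≤ L' Q0 := hP
    _ = OPT' := hQ0
  · obtain ⟨Q, h1, h2⟩ := hb P0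
    calc OPT' ≤ L' Q := hlb' ⟨Q, rfl⟩
    _ ≤ 3 * L P0 := h2
    _ = 3 * OPT := by rw [hP0]
end
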